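/- Let d, k ≥ 1 and let I be a BinCSP instance with Gaifman graph G whose domains are pairwise disjoint, and let (T, {V_t : t ∈ V(T)}) be a k-fat elimination tree of G of depth d in which |V_t| = k for every node t and every leaf of T is at depth exactly d. Define a relational structure 𝔸 over the signature {root(·), parent(·,·), bag(·,·), domain(·,·), forbidden(·,·)} with universe V(T) ∪ V(G) ∪ ⋃_{u∈V(G)} D(u), where: root selects only the root of T; parent is the parent/child relation of T; bag = {(t, u) : t ∈ V(T), u ∈ V_t}; domain = {(u, a) : u ∈ V(G), a ∈ D(u)}; and forbidden = ⋃_{uv∈E(G)} (D(u) × D(v)) ∖ C(u,v). Let φ be the first-order sentence ∃x₁ ∃y₁¹∃z₁¹…∃y₁ᵏ∃z₁ᵏ ∀x₂ ∃y₂¹∃z₂¹…∃y₂ᵏ∃z₂ᵏ ∀x₃ … ∀x_d ∃y_d¹∃z_d¹…∃y_dᵏ∃z_dᵏ [ root(x₁) ∧ ((parent(x₁,x₂) ∧ … ∧ parent(x_{d−1},x_d)) → ψ) ], where ψ = ⋀_{j=1}^d ⋀_{i=1}^k bag(x_j, y_jⁱ) ∧ ⋀_{j=1}^d ⋀_{1≤i<i′≤k}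 y_jⁱ ≠ y_jⁱ′ ∧ ⋀_{j=1}^d ⋀_{i=1}^k domain(y_jⁱ, z_jⁱ) ∧ ⋀_{(i,j)} ⋀_{(i′,j′)} ¬forbidden(z_jⁱ, z_{j′}ⁱ′). Then 𝔸 ⊨ φ if and only if I is satisfiable. -/

import Mathlib

/-- A rooted forest on a vertex type `V`, given by a parent function.
Well-foundedness guarantees that following parents from any vertex
eventually reaches a root (a vertex with no parent). -/
structure RootedForest (V : Type) where
  parent : V → Option V
  wf : WellFounded (fun a b => parent b = some a)

namespace RootedForest

/-- The depth of a vertex: the number of vertices on the path from its root to it. -/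
noncomputable def depth {V : Type} (F : RootedForest V) : V → ℕ :=
  F.wf.fix (fun v ih =>
    match h : F.parent v with
    | none => 1
    | some p => ih p h + 1)

/-- `F.anc u v` means that `u` is an ancestor of `v` in `F` (possibly `u = v`). -/
def anc {V : Type} (F : RootedForest V) (u v : V) : Prop :=
  Relation.ReflTransGen (fun a b => F.parent a = some b) v u

/-- A leaf is a vertex with no children. -/
def IsLeaf {V : Type} (F : RootedForest V) (v : V) : Prop := ∀ u, F.parent u ≠ some v

end RootedForest

/-- `AltSatBlocks k P j xs yzs` expresses
`∀ x ∃ (y¹,z¹) … (yᵏ,zᵏ) … (j quantifier blocks) …, P` with the accumulated choices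
passed to `P` in order. A block consists of a universally quantified element followed by
`k` existentially quantified pairs `(yⁱ, zⁱ)`. -/
def AltSatBlocks {U : Type} (k : ℕ) (P : List U → List (Fin k → U × U) → Prop) :
    ℕ → List U → List (Fin k → U × U) → Prop
  | 0, xs, yzs => P xs.reverse yzs.reverse
  | j + 1, xs, yzs => ∀ x : U, ∃ yz : Fin k → U × U,
      AltSatBlocks k P j (x :: xs) (yz :: yzs)

/-- The universe of the structure `𝔸`: the nodes of the tree `T`, the vertices of `G`,
and all domain values. -/
def Uni (Tn V A : Type) (D : V → Set A) : Type := Tn ⊕ V ⊕ {a : A // ∃ u, a ∈ D u}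

namespace RootedForest

variable {Vt : Type} (F : RootedForest Vt)

lemma depth_none {t : Vt} (h : F.parent t = none) : F.depth t = 1 := by
  unfold depth; rw [WellFounded.fix_eq]
  split <;> simp_all

lemma depth_some {t s : Vt} (h : F.parent t = some s) : F.depth t = F.depth s + 1 := by
  conv_lhs => unfold depth
  rw [WellFounded.fix_eq]
  split
  · simp_all
  · rename_i p hp
    rw [h] at hp
    cases hp
    rfl

lemma depth_pos (t : Vt) : 1 ≤ F.depth t := by
  cases h : F.parent t with
  | none => simp [F.depth_none h]
  | some s => simp [F.depth_some h]

lemma anc_trans {a b c : Vt} (h1 : F.anc a b) (h2 : F.anc b c) : F.anc a c :=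
  Relation.ReflTransGen.trans h2 h1

lemma exists_leaf_desc (d : ℕ) (hdepth : ∀ t : Vt, F.depth t ≤ d) (t : Vt) :
    ∃ ℓ, F.anc t ℓ ∧ F.IsLeaf ℓ := by
  have main : ∀ n t, d - F.depth t ≤ n → ∃ ℓ, F.anc t ℓ ∧ F.IsLeaf ℓ := by
    intro n
    induction n with
    | zero =>
      intro t ht
      by_cases hl : F.IsLeaf t
      · exact ⟨t, Relation.ReflTransGen.refl, hl⟩
      · simp only [IsLeaf, not_forall, not_not] at hl
        obtain ⟨s, hs⟩ := hl
        have := F.depth_some hs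
        have := hdepth s
        omega
    | succ n ih =>
      intro t ht
      by_cases hl : F.IsLeaf t
      · exact ⟨t, Relation.ReflTransGen.refl, hl⟩
      · simp only [IsLeaf, not_forall, not_not] at hl
        obtain ⟨s, hs⟩ := hl
        have hds := F.depth_some hs
        obtain ⟨ℓ, h1, h2⟩ := ih s (by omega)
        exact ⟨ℓ, F.anc_trans (Relation.ReflTransGen.single hs) h1, h2⟩
  exact main d t (by omega)

end RootedForest

lemma AltSatBlocks_of_fun {U : Type} {k : ℕ} {P : List U → List (Fin k → U × U) → Prop}
    (f : U → (Fin k → U × U)) :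
    ∀ (j : ℕ) (xs : List U) (yzs : List (Fin k → U × U)),
      (∀ l : List U, l.length = j → P (xs.reverse ++ l) (yzs.reverse ++ l.map f)) →
      AltSatBlocks k P j xs yzs
  | 0, xs, yzs, h => by simpa [AltSatBlocks] using h [] rfl
  | j+1, xs, yzs, h => by
      intro x
      refine ⟨f x, AltSatBlocks_of_fun f j (x::xs) (f x :: yzs) (fun l hl => ?_)⟩
      have := h (x :: l) (by simp [hl])
      simpa [List.append_assoc] using this

lemma AltSatBlocks_probe {U : Type} {k : ℕ} {P : List U → List (Fin k → U × U) → Prop}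
    (x0 : U) :
    ∀ (j : ℕ) (xs : List U) (yzs : List (Fin k → U × U)),
      AltSatBlocks k P j xs yzs →
      ∃ ex eyz, P ((ex ++ xs).reverse) ((eyz ++ yzs).reverse)
  | 0, xs, yzs, h => ⟨[], [], by simpa [AltSatBlocks] using h⟩
  | j+1, xs, yzs, h => by
      obtain ⟨yz, h'⟩ := h x0
      obtain ⟨ex, eyz, hp⟩ := AltSatBlocks_probe x0 j _ _ h'
      exact ⟨ex ++ [x0], eyz ++ [yz], by simpa [List.append_assoc] using hp⟩

/-- `xs` (in cons order, deepest first) is a chain going up the tree. -/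
def Guard' {Tn V A : Type} {D : V → Set A} (T : RootedForest Tn)
    (xs : List (Uni Tn V A D)) : Prop :=
  ∀ (j : ℕ) (x x' : Uni Tn V A D), xs[j]? = some x → xs[j+1]? = some x' →
    ∃ a b : Tn, x = Sum.inl a ∧ x' = Sum.inl b ∧ T.parent a = some b

lemma Guard'_toMatrix {Tn V A : Type} {D : V → Set A} {T : RootedForest Tn}
    {xs : List (Uni Tn V A D)} (h : Guard' T xs) :
    ∀ (j : ℕ) (x x' : Uni Tn V A D), xs.reverse[j]? = some x → xs.reverse[(j+1)]? = some x' →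
      ∃ s t : Tn, x = Sum.inl s ∧ x' = Sum.inl t ∧ T.parent t = some s := by
  intro j x x' h1 h2
  have hlen : j + 1 < xs.length := by
    have : (j+1) < xs.reverse.length := by
      by_contra hc
      rw [List.getElem?_eq_none (by omega)] at h2
      exact absurd h2 (by simp)
    simpa using this
  rw [List.getElem?_reverse (by omega)] at h1
  rw [List.getElem?_reverse (by omega)] at h2
  have e : xs.length - 1 - j = (xs.length - 1 - (j+1)) + 1 := by omega
  obtain ⟨a, b, ha, hb, hab⟩ := h (xs.length - 1 - (j+1)) x' x h2 (by rw [← e]; exact h1)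
  exact ⟨b, a, hb, ha, hab⟩

/-- Invariant carried down the tree in the forward direction. -/
def QInv {Tn V A : Type} {D : V → Set A} (T : RootedForest Tn) (k d : ℕ)
    (P : List (Uni Tn V A D) → List (Fin k → Uni Tn V A D × Uni Tn V A D) → Prop)
    (t : Tn)
    (p : List (Uni Tn V A D) × List (Fin k → Uni Tn V A D × Uni Tn V A D)) : Prop :=
  p.1.length = T.depth t ∧ p.2.length = T.depth t ∧ p.1[0]? = some (Sum.inl t) ∧
  Guard' T p.1 ∧ AltSatBlocks k P (d - T.depth t) p.1 p.2

lemma exists_st {Tn V A : Type} {D : V → Set A} (T : RootedForest Tn) (k d : ℕ)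
    (P : List (Uni Tn V A D) → List (Fin k → Uni Tn V A D × Uni Tn V A D) → Prop)
    (x₁ : Uni Tn V A D) (yz₁ : Fin k → Uni Tn V A D × Uni Tn V A D) (r0 : Tn)
    (hr0u : ∀ r, T.parent r = none → r = r0) (hx₁ : x₁ = Sum.inl r0)
    (hdepth : ∀ t, T.depth t ≤ d)
    (hAlt : AltSatBlocks k P (d-1) [x₁] [yz₁]) (hd : 1 ≤ d) :
    ∃ st : ∀ t : Tn, {p : List (Uni Tn V A D) ×
        List (Fin k → Uni Tn V A D × Uni Tn V A D) // QInv T k d P t p},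
      ∀ t s, T.parent t = some s →
        (st t).val.1 = Sum.inl t :: (st s).val.1 ∧
        ∃ F, (st t).val.2 = F :: (st s).val.2 := by
  classical
  have base : ∀ t : Tn, T.parent t = none → QInv T k d P t ([x₁],[yz₁]) := by
    intro t hp
    have ht : t = r0 := hr0u t hp
    subst ht
    have hdt : T.depth t = 1 := T.depth_none hp
    refine ⟨by simp [hdt], by simp [hdt], by simp [hx₁] <;> rfl, ?_, by rw [hdt]; exact hAlt⟩
    intro j x x' h1 h2
    rw [List.getElem?_eq_none (by simp)] at h2
    exact absurd h2 (by simp)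
  have stepex : ∀ (t s : Tn), T.parent t = some s →
      ∀ p : List (Uni Tn V A D) × List (Fin k → Uni Tn V A D × Uni Tn V A D),
      QInv T k d P s p → ∃ yz, QInv T k d P t (Sum.inl t :: p.1, yz :: p.2) := by
    intro t s hp p hQ
    obtain ⟨hl1, hl2, h0, hg, hA⟩ := hQ
    have hds := T.depth_some hp
    have hdt := hdepth t
    have harith : d - T.depth s = (d - T.depth t) + 1 := by omega
    rw [harith] at hA
    obtain ⟨yz, hyz⟩ := hA (Sum.inl t)
    refine ⟨yz, by show p.1.length + 1 = _; rw [hl1, hds], by simp [hl2, hds], by exact List.getElem?_cons_zero, ?_, hyz⟩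
    intro j x x' h1 h2
    cases j with
    | zero =>
      simp only [List.getElem?_cons_zero, Option.some.injEq] at h1
      change p.1[0]? = some x' at h2
      have h2' : (some (Sum.inl s) : Option (Uni Tn V A D)) = some x' := h0.symm.trans h2
      have h1' : (some (Sum.inl t) : Option (Uni Tn V A D)) = some x := h1
      exact ⟨t, s, (Option.some.inj h1').symm, (Option.some.inj h2').symm, hp⟩
    | succ j =>
      exact hg j x x' (by exact h1) (by exact h2)
  refine ⟨T.wf.fix (C := fun t => {p : List (Uni Tn V A D) ×
        List (Fin k → Uni Tn V A D × Uni Tn V A D) // QInv T k d P t p})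
    (fun t ih =>
      match hp : T.parent t with
      | none => ⟨([x₁],[yz₁]), base t hp⟩
      | some s => ⟨(Sum.inl t :: (ih s hp).val.1,
            Classical.choose (stepex t s hp (ih s hp).val (ih s hp).property)
              :: (ih s hp).val.2),
          Classical.choose_spec (stepex t s hp (ih s hp).val (ih s hp).property)⟩), ?_⟩
  intro t s hp
  rw [WellFounded.fix_eq]
  split
  · rename_i h; rw [hp] at h; exact absurd h (by simp)
  · rename_i s' h
    have hs : s' = s := by rw [hp] at h; exact (Option.some.inj h).symm
    subst hs
    exact ⟨rfl, _, rfl⟩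


/-- correctness of the reduction from BinCSP parameterized by `d`-fold
vertex cover to model-checking `Σ_{2d-1}`-sentences, witnessing `S[2d-1] ⊆ A[2d-1]`.
`(T, β)` is a `k`-fat elimination tree of `G` of depth `d` with all bags of size exactly
`k` and all leaves at depth exactly `d`; domains are pairwise disjoint. The sentence
`φ = ∃x₁∃ȳ₁z̄₁ ∀x₂∃ȳ₂z̄₂ … ∀x_d∃ȳ_dz̄_d (root(x₁) ∧ ((⋀ parent(x_{j-1},x_j)) → ψ))`
holds in the structure `𝔸` described in the paper iff the instance is satisfiable. -/
theorem stmt13 {Tn V A : Type} [Finite Tn] [Fintype V] (G : SimpleGraph V)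
    (D : V → Set A) (C : V → V → Set (A × A))
    (hsym : ∀ u v : V, ∀ a b : A, (a, b) ∈ C u v ↔ (b, a) ∈ C v u)
    (hdom : ∀ u v : V, ∀ a b : A, (a, b) ∈ C u v → a ∈ D u ∧ b ∈ D v)
    (hdisj : ∀ u v : V, u ≠ v → Disjoint (D u) (D v))
    (d k : ℕ) (hd : 1 ≤ d) (hk : 1 ≤ k)
    -- `(T, β)` is a `k`-fat elimination tree of `G` of depth `d`: `T` is a rooted tree,
    -- the bags `β ⁻¹' {t}` have size exactly `k`, every leaf is at depth exactly `d`,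
    -- and the endpoints of every edge of `G` lie in comparable bags
    (T : RootedForest Tn) (β : V → Tn)
    (hroot : ∃! r : Tn, T.parent r = none)
    (hdepth : ∀ t : Tn, T.depth t ≤ d)
    (hleaf : ∀ t : Tn, T.IsLeaf t → T.depth t = d)
    (hbag : ∀ t : Tn, Nat.card (β ⁻¹' {t}) = k)
    (hfat : ∀ u v : V, G.Adj u v → T.anc (β u) (β v) ∨ T.anc (β v) (β u)) :
    (∃ (x₁ : Uni Tn V A D) (yz₁ : Fin k → Uni Tn V A D × Uni Tn V A D),
      AltSatBlocks k (fun xs yzs =>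
        -- `root(x₁)`
        (∀ x : Uni Tn V A D, xs[0]? = some x →
            ∃ r : Tn, x = Sum.inl r ∧ T.parent r = none) ∧
        -- the guard `parent(x₁,x₂) ∧ … ∧ parent(x_{d-1},x_d)` implies the matrix `ψ`
        ((∀ (j : ℕ) (x x' : Uni Tn V A D), xs[j]? = some x → xs[(j+1)]? = some x' →
            ∃ s t : Tn, x = Sum.inl s ∧ x' = Sum.inl t ∧ T.parent t = some s) →
          -- `ψ`, first part: in each block `j`, the `y`'s lie in the bag of `x_j` and
          -- are pairwise distinct, and `z_jⁱ` is a domain value of `y_jⁱ`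
          ((∀ (j : ℕ) (x : Uni Tn V A D) (F : Fin k → Uni Tn V A D × Uni Tn V A D),
              xs[j]? = some x → yzs[j]? = some F →
              (∀ i : Fin k, ∃ (t : Tn) (u : V),
                  x = Sum.inl t ∧ (F i).1 = Sum.inr (Sum.inl u) ∧ β u = t) ∧
              (∀ i i' : Fin k, i ≠ i' → (F i).1 ≠ (F i').1) ∧
              (∀ i : Fin k, ∃ (u : V) (a : {a : A // ∃ w, a ∈ D w}),
                  (F i).1 = Sum.inr (Sum.inl u) ∧ (F i).2 = Sum.inr (Sum.inr a) ∧
                  (a : A) ∈ D u)) ∧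
           -- `ψ`, second part: no pair of chosen values is forbidden
           (∀ (j j' : ℕ) (F F' : Fin k → Uni Tn V A D × Uni Tn V A D),
              yzs[j]? = some F → yzs[j']? = some F' → ∀ i i' : Fin k,
              ¬ ∃ (u v : V) (a b : {a : A // ∃ w, a ∈ D w}),
                  (F i).2 = Sum.inr (Sum.inr a) ∧ (F' i').2 = Sum.inr (Sum.inr b) ∧
                  G.Adj u v ∧ (a : A) ∈ D u ∧ (b : A) ∈ D v ∧
                  ((a : A), (b : A)) ∉ C u v))))
        (d - 1) [x₁] [yz₁])
    ↔ (∃ η : V → A, (∀ v, η v ∈ D v) ∧ ∀ u v, G.Adj u v → (η u, η v) ∈ C u v) := by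
  classical
  obtain ⟨r0, hr0, hr0u⟩ := hroot
  constructor
  · -- forward direction
    rintro ⟨x₁, yz₁, hAlt⟩
    obtain ⟨ex, eyz, hP0⟩ := AltSatBlocks_probe x₁ (d-1) [x₁] [yz₁] hAlt
    obtain ⟨r', hx₁, hr'⟩ := hP0.1 x₁ (by simp)
    have hx₁' : x₁ = Sum.inl r0 := by rw [hx₁, hr0u r' hr']
    obtain ⟨st, hst⟩ := exists_st T k d _ x₁ yz₁ r0 (fun r h => hr0u r h) hx₁' hdepth hAlt hd
    have hFt0 : ∀ t : Tn, ∃ F, ((st t).val.2)[0]? = some F := by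
      intro t
      have hl := (st t).property.2.1
      have hpos := T.depth_pos t
      cases hv : (st t).val.2 with
      | nil => rw [hv] at hl; simp at hl; omega
      | cons F rest => exact ⟨F, List.getElem?_cons_zero⟩
    choose Ft hFt using hFt0
    have hancl : ∀ t ℓ, T.anc t ℓ → ∃ p1 p2, (st ℓ).val.1 = p1 ++ (st t).val.1 ∧
        (st ℓ).val.2 = p2 ++ (st t).val.2 := by
      intro t ℓ h
      induction h using Relation.ReflTransGen.head_induction_on with
      | refl => exact ⟨[], [], by simp, by simp⟩
      | @head a c h' hrest ih =>
        obtain ⟨p1, p2, e1, e2⟩ := ih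
        obtain ⟨e1', F, e2'⟩ := hst _ _ h'
        exact ⟨Sum.inl a :: p1, F :: p2, by rw [e1', e1]; rfl,
          by rw [e2', e2, List.cons_append]⟩
    have hidx : ∀ t ℓ, T.anc t ℓ →
        ((st ℓ).val.1.reverse)[T.depth t - 1]? = some (Sum.inl t) ∧
        ((st ℓ).val.2.reverse)[T.depth t - 1]? = some (Ft t) := by
      intro t ℓ h
      obtain ⟨p1, p2, e1, e2⟩ := hancl t ℓ h
      obtain ⟨hl1, hl2, h0, hg, -⟩ := (st t).property
      have hpos := T.depth_pos t
      constructor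
      · rw [e1, List.reverse_append, List.getElem?_append, if_pos (by simp [hl1]; omega)]
        rw [List.getElem?_reverse (by rw [hl1]; omega)]
        have e0 : (st t).val.1.length - 1 - (T.depth t - 1) = 0 := by rw [hl1]; omega
        rw [e0]; exact h0
      · rw [e2, List.reverse_append, List.getElem?_append, if_pos (by simp [hl2]; omega)]
        rw [List.getElem?_reverse (by rw [hl2]; omega)]
        have e0 : (st t).val.2.length - 1 - (T.depth t - 1) = 0 := by rw [hl2]; omega
        rw [e0]; exact hFt t
    have hkey : ∀ v : V, ∃ (i : Fin k) (a : {a : A // ∃ w, a ∈ D w}),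
        (Ft (β v) i).1 = Sum.inr (Sum.inl v) ∧ (Ft (β v) i).2 = Sum.inr (Sum.inr a) ∧
        (a : A) ∈ D v := by
      intro v
      obtain ⟨ℓ, hancv, hlf⟩ := T.exists_leaf_desc d hdepth (β v)
      have hA := (st ℓ).property.2.2.2.2
      rw [show d - T.depth ℓ = 0 from by rw [hleaf ℓ hlf]; omega] at hA
      simp only [AltSatBlocks] at hA
      have hψ := hA.2 (Guard'_toMatrix (st ℓ).property.2.2.2.1)
      obtain ⟨hi1, hi2⟩ := hidx (β v) ℓ hancv
      obtain ⟨hb, hdist, hdomv⟩ := hψ.1 (T.depth (β v) - 1) (Sum.inl (β v)) (Ft (β v)) hi1 hi2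
      choose t' u hbt hbu hβu' using hb
      have hβu : ∀ i, β (u i) = β v := by
        intro i
        rw [hβu' i]
        exact (Sum.inl.inj (hbt i)).symm
      have hu_inj : Function.Injective u := by
        intro i i' e
        by_contra ne
        exact hdist i i' ne (by rw [hbu i, hbu i', e])
      have hbij : Function.Bijective (fun i => (⟨u i, hβu i⟩ : (β ⁻¹' {β v}))) := by
        rw [Nat.bijective_iff_injective_and_card]
        refine ⟨fun i i' e => hu_inj (congrArg Subtype.val e), ?_⟩
        rw [hbag (β v)]
        simp
      obtain ⟨i, hi⟩ := hbij.2 ⟨v, rfl⟩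
      have huv : u i = v := congrArg Subtype.val hi
      obtain ⟨u', a, hA1, hA2, hA3⟩ := hdomv i
      have hu' : u' = u i := (Sum.inl.inj (Sum.inr.inj ((hbu i).symm.trans hA1))).symm
      exact ⟨i, a, by rw [hbu i, huv], hA2, by rwa [hu', huv] at hA3⟩
    choose iv av hv1 hv2 hv3 using hkey
    refine ⟨fun v => (av v : A), fun v => hv3 v, ?_⟩
    have hcon : ∀ u v, G.Adj u v → T.anc (β u) (β v) →
        ((av u : A), (av v : A)) ∈ C u v := by
      intro u v hadj hancuv
      obtain ⟨ℓ, hancv, hlf⟩ := T.exists_leaf_desc d hdepth (β v)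
      have hancu := T.anc_trans hancuv hancv
      have hA := (st ℓ).property.2.2.2.2
      rw [show d - T.depth ℓ = 0 from by rw [hleaf ℓ hlf]; omega] at hA
      simp only [AltSatBlocks] at hA
      have hψ := hA.2 (Guard'_toMatrix (st ℓ).property.2.2.2.1)
      have h2 := hψ.2 (T.depth (β u) - 1) (T.depth (β v) - 1) (Ft (β u)) (Ft (β v))
        (hidx (β u) ℓ hancu).2 (hidx (β v) ℓ hancv).2 (iv u) (iv v)
      by_contra hnc
      exact h2 ⟨u, v, av u, av v, hv2 u, hv2 v, hadj, hv3 u, hv3 v, hnc⟩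
    intro u v hadj
    rcases hfat u v hadj with h | h
    · exact hcon u v hadj h
    · exact (hsym v u _ _).1 (hcon v u hadj.symm h)
  · -- backward direction
    rintro ⟨η, hη, hC⟩
    have hbagfun : ∀ t : Tn, ∃ e : Fin k → V, (∀ i, β (e i) = t) ∧ Function.Injective e := by
      intro t
      haveI : Fintype (β ⁻¹' {t}) := Fintype.ofFinite _
      have hc : Fintype.card (β ⁻¹' {t}) = k := by
        rw [← Nat.card_eq_fintype_card]; exact hbag t
      let e := (Fintype.equivFinOfCardEq hc).symm
      refine ⟨fun i => (e i).val, fun i => (e i).property, ?_⟩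
      intro i i' h
      exact e.injective (Subtype.ext h)
    choose ebag hb1 hb2 using hbagfun
    obtain ⟨f, hf1, hf2, hf3⟩ :
        ∃ f : Uni Tn V A D → Fin k → Uni Tn V A D × Uni Tn V A D,
          (∀ t i, (f (Sum.inl t) i).1 = Sum.inr (Sum.inl (ebag t i))) ∧
          (∀ t i, (f (Sum.inl t) i).2 =
            Sum.inr (Sum.inr ⟨η (ebag t i), ⟨ebag t i, hη _⟩⟩)) ∧
          (∀ x i, ∃ w : V, (f x i).1 = Sum.inr (Sum.inl w) ∧
            (f x i).2 = Sum.inr (Sum.inr ⟨η w, ⟨w, hη w⟩⟩)) := by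
      refine ⟨fun x => match x with
        | Sum.inl t => fun i =>
            (Sum.inr (Sum.inl (ebag t i)), Sum.inr (Sum.inr ⟨η (ebag t i), ⟨ebag t i, hη _⟩⟩))
        | _ => fun i =>
            (Sum.inr (Sum.inl (ebag r0 i)), Sum.inr (Sum.inr ⟨η (ebag r0 i), ⟨ebag r0 i, hη _⟩⟩)),
        fun t i => rfl, fun t i => rfl, ?_⟩
      intro x i
      rcases x with t | x
      · exact ⟨ebag t i, rfl, rfl⟩
      · exact ⟨ebag r0 i, rfl, rfl⟩
    refine ⟨Sum.inl r0, f (Sum.inl r0), AltSatBlocks_of_fun f (d-1) _ _ ?_⟩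
    intro l hl
    have e0 : (([Sum.inl r0] : List (Uni Tn V A D)).reverse ++ l) = Sum.inl r0 :: l := by rfl
    have eL : ([f (Sum.inl r0)].reverse ++ l.map f) =
        (([Sum.inl r0] : List (Uni Tn V A D)).reverse ++ l).map f := by rfl
    refine ⟨?_, ?_⟩
    · intro x hx
      rw [e0] at hx; replace hx : (some (Sum.inl r0) : Option (Uni Tn V A D)) = some x := hx
      exact ⟨r0, (Option.some.inj hx).symm, hr0⟩
    · intro hguard
      have hinl : ∀ (j : ℕ) (x : Uni Tn V A D),
          (([Sum.inl r0] : List (Uni Tn V A D)).reverse ++ l)[j]? = some x →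
          ∃ t : Tn, x = Sum.inl t := by
        intro j x hx
        cases j with
        | zero =>
          rw [e0] at hx; replace hx : (some (Sum.inl r0) : Option (Uni Tn V A D)) = some x := hx
          exact ⟨r0, (Option.some.inj hx).symm⟩
        | succ j =>
          have hj1 : j + 1 < (([Sum.inl r0] : List (Uni Tn V A D)).reverse ++ l).length := by
            by_contra hc
            rw [List.getElem?_eq_none (by omega)] at hx
            exact absurd hx (by simp)
          obtain ⟨x0, hx0⟩ : ∃ x0, (([Sum.inl r0] : List (Uni Tn V A D)).reverse ++ l)[j]? = some x0 := by
            rw [List.getElem?_eq_getElem (by omega)]; exact ⟨_, rfl⟩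
          obtain ⟨s, t, -, h2, -⟩ := hguard j x0 x hx0 hx
          exact ⟨t, h2⟩
      refine ⟨?_, ?_⟩
      · -- part 1
        intro j x F hx hF
        obtain ⟨t, rfl⟩ := hinl j x hx
        rw [eL] at hF
        rw [List.getElem?_map, hx] at hF
        have hFf : F = f (Sum.inl t) := (Option.some.inj hF).symm
        refine ⟨?_, ?_, ?_⟩
        · intro i
          exact ⟨t, ebag t i, rfl, by rw [hFf]; exact hf1 t i, hb1 t i⟩
        · intro i i' hii' heq
          rw [hFf, hf1 t i, hf1 t i'] at heq
          exact hii' (hb2 t (Sum.inl.inj (Sum.inr.inj heq)))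
        · intro i
          exact ⟨ebag t i, ⟨η (ebag t i), ⟨ebag t i, hη _⟩⟩,
            by rw [hFf]; exact hf1 t i, by rw [hFf]; exact hf2 t i, hη _⟩
      · -- part 2
        intro j j' F F' hF hF' i i'
        rintro ⟨u, v, a, b, ha, hb', hadj, hau, hbv, hnC⟩
        rw [eL] at hF hF'
        obtain ⟨x, hx, hFx⟩ : ∃ x, (([Sum.inl r0] : List (Uni Tn V A D)).reverse ++ l)[j]? = some x ∧
            F = f x := by
          rw [List.getElem?_map] at hF
          cases hLj : (([Sum.inl r0] : List (Uni Tn V A D)).reverse ++ l)[j]? with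
          | none => rw [hLj] at hF; exact absurd hF (by simp)
          | some x => rw [hLj] at hF; exact ⟨x, rfl, (Option.some.inj hF).symm⟩
        obtain ⟨x', hx', hFx'⟩ : ∃ x',
            (([Sum.inl r0] : List (Uni Tn V A D)).reverse ++ l)[j']? = some x' ∧ F' = f x' := by
          rw [List.getElem?_map] at hF'
          cases hLj : (([Sum.inl r0] : List (Uni Tn V A D)).reverse ++ l)[j']? with
          | none => rw [hLj] at hF'; exact absurd hF' (by simp)
          | some x => rw [hLj] at hF'; exact ⟨x, rfl, (Option.some.inj hF').symm⟩
        obtain ⟨w, hw1, hw2⟩ := hf3 x i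
        obtain ⟨w', hw1', hw2'⟩ := hf3 x' i'
        rw [hFx, hw2] at ha
        rw [hFx', hw2'] at hb'
        have haw : a = ⟨η w, ⟨w, hη w⟩⟩ := (Sum.inr.inj (Sum.inr.inj ha)).symm
        have hbw : b = ⟨η w', ⟨w', hη w'⟩⟩ := (Sum.inr.inj (Sum.inr.inj hb')).symm
        have hav : (a : A) = η w := by rw [haw]
        have hbv' : (b : A) = η w' := by rw [hbw]
        have huw : u = w := by
          by_contra hne
          exact (Set.disjoint_left.mp (hdisj u w hne)) hau (by rw [hav]; exact hη w)
        have hvw : v = w' := by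
          by_contra hne
          exact (Set.disjoint_left.mp (hdisj v w' hne)) hbv (by rw [hbv']; exact hη w')
        apply hnC
        rw [hav, hbv', ← huw, ← hvw]
        exact hC u v hadj
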